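/- Let Ω ⊂ ℝⁿ be a bounded open set, T > 0, g : (ℝⁿ ∖ Ω) × [0,T] → ℝ and u₀ : Ω → ℝ. Suppose ṽ : ℝⁿ × [0,T] → ℝ is bounded and continuous, continuously differentiable in t, with ṽ(·,t) ∈ C²(ℝⁿ) having α-Hölder second derivatives with a constant H uniform in t, and that ṽ solves the heat-type equation ∂ₜṽ(x,t) = (C(J)/2) Δṽ(x,t) for x ∈ Ω and t ∈ (0,T], ṽ(x,t) = g(x,t) for x ∉ Ω, and ṽ(x,0) = u₀(x) for x ∈ Ω. For each 0 < ε ≤ 1 let u^ε : ℝⁿ × [0,T] → ℝ be bounded, continuous on cl(Ω) × [0,T], differentiable in t on (0,T] for each x ∈ Ω, and satisfy the rescaled convolution equation ∂ₜu^ε(x,t) = ε^{−2} ∫_{ℝⁿ} J(y)(u^ε(x − εy, t) − u^ε(x,t)) dy for x ∈ Ω and t ∈ (0,T], together with u^ε(x,t) = g(x,t) for x ∉ Ω and u^ε(x,0) = u₀(x) for x ∈ Ω. Then there exists a constant c, independent of ε, such that sup_{(x,t) ∈ Ω × [0,T]} |u^ε(x,t) − ṽ(x,t)| ≤ c ε^α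 for all 0 < ε ≤ 1. (This is the abelian instance of the uniform approximation of the Dirichlet problem for the heat equation by rescaled nonlocal evolution problems described in Section 3 of the paper.) -/

import Mathlib

open MeasureTheory Matrix Set

/-- First partial derivative `∂ᵢ f (x)`. -/
noncomputable def pd1 {n : ℕ} (f : EuclideanSpace ℝ (Fin n) → ℝ)
    (x : EuclideanSpace ℝ (Fin n)) (i : Fin n) : ℝ :=
  fderiv ℝ f x (EuclideanSpace.single i 1)

/-- Second partial derivative `∂ᵢ∂ⱼ f (x)`. -/
noncomputable def pd2 {n : ℕ} (f : EuclideanSpace ℝ (Fin n) → ℝ)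
    (x : EuclideanSpace ℝ (Fin n)) (i j : Fin n) : ℝ :=
  fderiv ℝ (fderiv ℝ f) x (EuclideanSpace.single i 1) (EuclideanSpace.single j 1)

/-- The Laplacian `Δf(x) = ∑ᵢ ∂ᵢ∂ᵢ f(x)`. -/
noncomputable def lap {n : ℕ} (f : EuclideanSpace ℝ (Fin n) → ℝ)
    (x : EuclideanSpace ℝ (Fin n)) : ℝ :=
  ∑ i, pd2 f x i i

/-- The rescaled nonlocal convolution operator
`ℰ_ε u(x) = ε^{−2} ∫ J(y)(u(x − εy) − u(x)) dy`. -/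
noncomputable def Eop {n : ℕ} (J : EuclideanSpace ℝ (Fin n) → ℝ) (ε : ℝ)
    (u : EuclideanSpace ℝ (Fin n) → ℝ) (x : EuclideanSpace ℝ (Fin n)) : ℝ :=
  (ε ^ 2)⁻¹ * ∫ y, J y * (u (x - ε • y) - u x)

/-!
Consistency plus stability. Expanding `ṽ(·, t)` to second order with an `α`-Hölder remainder and
integrating against the even kernel `J`, whose second moments are `C(J) δᵢⱼ`, the first-order term
vanishes and the second-order term gives `ε² (C(J)/2) Δṽ`; hence `ṽ` solves the rescaled nonlocal
equation up to a defect `K ε^α`. The nonlocal equation obeys a maximum principle, because `ℰ_ε w`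
is nonpositive at a global maximum point of `w`. So if `∂ₜW ≤ ℰ_ε W + K` in `Ω`, with `W = 0` off
`Ω` and at `t = 0`, then `W` cannot be positive at a maximum point of `W - (K + δ) t` over the
compact set `cl Ω × [0, T]`: that point would lie in `Ω × (0, T]`, where the time derivative of
`W - (K + δ) t` is both `≥ 0` and `≤ ℰ_ε W + K - (K + δ) ≤ -δ`. Hence `W ≤ (K + δ) T`. Applied to
`±(u^ε - ṽ)` this gives `|u^ε - ṽ| ≤ K T ε^α`.
-/

section Taylor

variable {E : Type*} [NormedAddCommGroup E] [NormedSpace ℝ E] {f : E → ℝ}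

noncomputable def taylorRemainder₂ (f : E → ℝ) (x h : E) : ℝ :=
  f (x + h) - f x - fderiv ℝ f x h - 1 / 2 * fderiv ℝ (fderiv ℝ f) x h h

theorem abs_taylorRemainder₂_le (hf : ContDiff ℝ 2 f) (x h : E) {M : ℝ}
    (hM : ∀ s ∈ Icc (0 : ℝ) 1,
      |fderiv ℝ (fderiv ℝ f) (x + s • h) h h - fderiv ℝ (fderiv ℝ f) x h h| ≤ M) :
    |taylorRemainder₂ f x h| ≤ M := by
  have hf₁ : Differentiable ℝ f := hf.differentiable (by norm_num)
  have hf₂ : Differentiable ℝ (fderiv ℝ f) :=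
    (hf.fderiv_right (m := 1) (by norm_num)).differentiable (by norm_num)
  have hline (s : ℝ) : HasDerivAt (fun s : ℝ => x + s • h) h s := by
    simpa using ((hasDerivAt_id s).smul_const h).const_add x
  set c := fderiv ℝ (fderiv ℝ f) x h h
  set ψ : ℝ → ℝ := fun s => fderiv ℝ f (x + s • h) h - fderiv ℝ f x h - s * c
  have hψ (s : ℝ) : HasDerivAt ψ (fderiv ℝ (fderiv ℝ f) (x + s • h) h h - c) s := by
    refine ((((hf₂ _).hasFDerivAt.comp_hasDerivAt s (hline s)).clm_apply
      (hasDerivAt_const s h)).sub_const _ |>.sub (hasDerivAt_mul_const c)).congr_deriv ?_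
    simp
  have hM₀ : 0 ≤ M := (abs_nonneg _).trans (hM 0 (left_mem_Icc.2 zero_le_one))
  have hψ_le : ∀ s ∈ Ico (0 : ℝ) 1, ‖ψ s‖ ≤ M := fun s hs => by
    have := norm_image_sub_le_of_norm_deriv_le_segment' (fun s _ => (hψ s).hasDerivWithinAt)
      (fun s hs => hM s (Ico_subset_Icc_self hs)) s (Ico_subset_Icc_self hs)
    have hψ₀ : ψ 0 = 0 := by simp [ψ]
    rw [hψ₀, sub_zero, sub_zero] at this
    exact this.trans (mul_le_of_le_one_right hM₀ hs.2.le)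
  have hg (s : ℝ) : HasDerivAt (fun s => f (x + s • h) - s * fderiv ℝ f x h - s ^ 2 / 2 * c)
      (ψ s) s := by
    refine ((((hf₁ _).hasFDerivAt.comp_hasDerivAt s (hline s)).sub (hasDerivAt_mul_const _)).sub
      (((hasDerivAt_pow 2 s).div_const 2).mul_const c)).congr_deriv ?_
    simp only [ψ]
    ring
  have := norm_image_sub_le_of_norm_deriv_le_segment_01' (fun s _ => (hg s).hasDerivWithinAt) hψ_le
  rw [Real.norm_eq_abs] at this
  convert this using 2
  simp only [taylorRemainder₂, one_smul, zero_smul, add_zero, c]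
  ring

end Taylor

namespace EuclideanSpace

variable {n : ℕ}

theorem clm_apply_apply_eq_sum
    (B : EuclideanSpace ℝ (Fin n) →L[ℝ] EuclideanSpace ℝ (Fin n) →L[ℝ] ℝ)
    (h k : EuclideanSpace ℝ (Fin n)) :
    B h k = ∑ i, ∑ j, h i * k j * B (single i 1) (single j 1) := by
  have hrepr (y : EuclideanSpace ℝ (Fin n)) : y = ∑ i, y i • single i (1 : ℝ) := by
    simpa [EuclideanSpace.basisFun_apply] using
      ((EuclideanSpace.basisFun (Fin n) ℝ).toBasis.sum_repr y).symm
  conv_lhs => rw [hrepr h, hrepr k]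
  simp only [map_sum, map_smul, _root_.sum_apply, _root_.smul_apply, smul_eq_mul, Finset.mul_sum]
  rw [Finset.sum_comm]
  exact Finset.sum_congr rfl fun i _ => Finset.sum_congr rfl fun j _ => by ring

theorem abs_clm_apply_apply_self_le
    (B : EuclideanSpace ℝ (Fin n) →L[ℝ] EuclideanSpace ℝ (Fin n) →L[ℝ] ℝ) {M : ℝ}
    (hB : ∀ i j, |B (single i 1) (single j 1)| ≤ M) (h : EuclideanSpace ℝ (Fin n)) :
    |B h h| ≤ n ^ 2 * M * ‖h‖ ^ 2 := by
  have hcoord (i : Fin n) : |h i| ≤ ‖h‖ := by simpa using PiLp.norm_apply_le h i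
  rw [clm_apply_apply_eq_sum]
  calc |∑ i, ∑ j, h i * h j * B (single i 1) (single j 1)|
      ≤ ∑ _i : Fin n, ∑ _j : Fin n, ‖h‖ ^ 2 * M := by
        refine (Finset.abs_sum_le_sum_abs _ _).trans (Finset.sum_le_sum fun i _ => ?_)
        refine (Finset.abs_sum_le_sum_abs _ _).trans (Finset.sum_le_sum fun j _ => ?_)
        rw [abs_mul, abs_mul, sq]
        gcongr
        exacts [hcoord i, hcoord j, hB i j]
    _ = n ^ 2 * M * ‖h‖ ^ 2 := by
        simp only [Finset.sum_const, Finset.card_univ, Fintype.card_fin, nsmul_eq_mul]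
        ring

end EuclideanSpace

theorem MeasureTheory.Integrable.mul_continuous_of_hasCompactSupport {X : Type*} [MeasurableSpace X]
    [TopologicalSpace X] [OpensMeasurableSpace X] [T2Space X] {μ : Measure X} {J g : X → ℝ}
    (hJ : Integrable J μ) (hJcs : HasCompactSupport J) (hg : Continuous g) :
    Integrable (fun y => J y * g y) μ :=
  (integrableOn_iff_integrable_of_support_subset
    ((Function.support_mul_subset_left _ _).trans (subset_tsupport J))).1
    (hJ.integrableOn.mul_continuousOn hg.continuousOn hJcs)

theorem Measurable.of_continuousOn_of_eqOn_compl {X : Type*} [TopologicalSpace X]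
    [MeasurableSpace X] [OpensMeasurableSpace X] {s : Set X} (hs : MeasurableSet s)
    {f g : X → ℝ} (hf : ContinuousOn f s) (hg : Continuous g) (hfg : EqOn f g sᶜ) :
    Measurable f := by
  classical
  have : f = s.piecewise f g := by
    ext z
    by_cases hz : z ∈ s
    · simp [hz]
    · simp [hz, hfg hz]
  rw [this]
  exact hf.measurable_piecewise hg.continuousOn hs

section Holder

variable {n : ℕ} {f : EuclideanSpace ℝ (Fin n) → ℝ} {H α : ℝ}

theorem abs_taylorRemainder₂_le_of_holder (hf : ContDiff ℝ 2 f) (hα : 0 ≤ α) (hH : 0 ≤ H)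
    (hf₂ : ∀ x y (i j : Fin n), |pd2 f x i j - pd2 f y i j| ≤ H * ‖x - y‖ ^ α)
    (x h : EuclideanSpace ℝ (Fin n)) :
    |taylorRemainder₂ f x h| ≤ n ^ 2 * (H * ‖h‖ ^ α) * ‖h‖ ^ 2 := by
  refine abs_taylorRemainder₂_le hf x h fun s hs => ?_
  rw [← _root_.sub_apply, ← _root_.sub_apply]
  refine EuclideanSpace.abs_clm_apply_apply_self_le _ (fun i j => ?_) h
  have hsh : ‖x + s • h - x‖ ≤ ‖h‖ := by
    rw [add_sub_cancel_left, norm_smul, Real.norm_eq_abs, abs_of_nonneg hs.1]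
    exact mul_le_of_le_one_left (norm_nonneg h) hs.2
  calc |(fderiv ℝ (fderiv ℝ f) (x + s • h) - fderiv ℝ (fderiv ℝ f) x)
          (EuclideanSpace.single i 1) (EuclideanSpace.single j 1)|
      = |pd2 f (x + s • h) i j - pd2 f x i j| := rfl
    _ ≤ H * ‖h‖ ^ α := (hf₂ _ _ i j).trans (by gcongr)

end Holder

theorem integral_mul_clm_eq_zero_of_even {E : Type*} [NormedAddCommGroup E] [NormedSpace ℝ E]
    [MeasurableSpace E] [MeasurableNeg E] {μ : Measure E} [μ.IsNegInvariant] {J : E → ℝ}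
    (hJ : ∀ x, J (-x) = J x) (L : E →L[ℝ] ℝ) : ∫ y, J y * L y ∂μ = 0 := by
  have h := integral_neg_eq_self (fun y => J y * L y) μ
  simp only [hJ, map_neg, mul_neg, integral_neg] at h
  linarith

section Nonlocal

variable {n : ℕ} {J : EuclideanSpace ℝ (Fin n) → ℝ}

theorem integral_mul_clm_apply_apply {CJ : ℝ}
    (hJint : ∀ i j : Fin n, Integrable fun y : EuclideanSpace ℝ (Fin n) => J y * (y i * y j))
    (hJmom : ∀ i j : Fin n, ∫ y, J y * (y i * y j) = if i = j then CJ else 0)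
    (B : EuclideanSpace ℝ (Fin n) →L[ℝ] EuclideanSpace ℝ (Fin n) →L[ℝ] ℝ) :
    ∫ y, J y * B y y = CJ * ∑ i, B (EuclideanSpace.single i 1) (EuclideanSpace.single i 1) := by
  have hsum (y : EuclideanSpace ℝ (Fin n)) : J y * B y y = ∑ i, ∑ j,
      B (EuclideanSpace.single i 1) (EuclideanSpace.single j 1) * (J y * (y i * y j)) := by
    rw [EuclideanSpace.clm_apply_apply_eq_sum, Finset.mul_sum]
    refine Finset.sum_congr rfl fun i _ => ?_
    rw [Finset.mul_sum]
    exact Finset.sum_congr rfl fun j _ => by ring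
  simp_rw [hsum]
  rw [integral_finsetSum _ fun i _ => integrable_finsetSum _ fun j _ => (hJint i j).const_mul _]
  simp_rw [integral_finsetSum _ fun j _ => (hJint _ j).const_mul _, integral_const_mul, hJmom,
    mul_ite, mul_zero, Finset.sum_ite_eq, Finset.mem_univ, if_true, Finset.mul_sum]
  exact Finset.sum_congr rfl fun i _ => mul_comm _ _

theorem integrable_mul_sub_comp_sub_smul (hJ : Integrable J) {u : EuclideanSpace ℝ (Fin n) → ℝ}
    (hu : Measurable u) (hub : ∃ C, ∀ z, |u z| ≤ C) (ε : ℝ) (x : EuclideanSpace ℝ (Fin n)) :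
    Integrable fun y => J y * (u (x - ε • y) - u x) := by
  obtain ⟨C, hC⟩ := hub
  refine (hJ.bdd_mul (c := C + C) ?_ (ae_of_all _ fun y => ?_)).congr
    (ae_of_all _ fun y => mul_comm _ _)
  · exact ((hu.comp (measurable_const.sub (measurable_id.const_smul ε))).sub
      measurable_const).aestronglyMeasurable
  · exact (abs_sub _ _).trans (add_le_add (hC _) (hC _))

theorem Eop_sub {ε : ℝ} {u w : EuclideanSpace ℝ (Fin n) → ℝ} {x : EuclideanSpace ℝ (Fin n)}
    (hu : Integrable fun y => J y * (u (x - ε • y) - u x))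
    (hw : Integrable fun y => J y * (w (x - ε • y) - w x)) :
    Eop J ε (fun y => u y - w y) x = Eop J ε u x - Eop J ε w x := by
  simp only [Eop, ← mul_sub, ← integral_sub hu hw]
  congr 2
  ext y
  ring

theorem Eop_nonpos_of_forall_le (hJ : ∀ y, 0 ≤ J y) {ε : ℝ} {u : EuclideanSpace ℝ (Fin n) → ℝ}
    {x : EuclideanSpace ℝ (Fin n)} (hx : ∀ y, u y ≤ u x) : Eop J ε u x ≤ 0 :=
  mul_nonpos_of_nonneg_of_nonpos (by positivity) <| integral_nonpos fun y =>
    mul_nonpos_of_nonneg_of_nonpos (hJ y) (sub_nonpos.2 (hx _))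

theorem integral_mul_sub_eq_add_integral_taylorRemainder₂ (hJ : Integrable J)
    (hJcs : HasCompactSupport J) (hJeven : ∀ y, J (-y) = J y) {CJ : ℝ}
    (hJmom : ∀ i j : Fin n, ∫ y, J y * (y i * y j) = if i = j then CJ else 0)
    {f : EuclideanSpace ℝ (Fin n) → ℝ} (hf : ContDiff ℝ 2 f) (ε : ℝ)
    (x : EuclideanSpace ℝ (Fin n)) :
    ∫ y, J y * (f (x - ε • y) - f x)
      = ε ^ 2 / 2 * (CJ * lap f x) + ∫ y, J y * taylorRemainder₂ f x (-(ε • y)) := by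
  have hint {g : EuclideanSpace ℝ (Fin n) → ℝ} (hg : Continuous g) :
      Integrable fun y => J y * g y :=
    hJ.mul_continuous_of_hasCompactSupport hJcs hg
  set L := fderiv ℝ f x
  set B := fderiv ℝ (fderiv ℝ f) x
  have hr : Continuous fun y => taylorRemainder₂ f x (-(ε • y)) := by
    unfold taylorRemainder₂
    fun_prop
  have hexpand : (fun y => J y * (f (x - ε • y) - f x)) = fun y =>
      -ε * (J y * L y) + (ε ^ 2 / 2 * (J y * B y y) + J y * taylorRemainder₂ f x (-(ε • y))) := by
    ext y
    simp only [taylorRemainder₂, ← sub_eq_add_neg, map_neg, map_smul, _root_.neg_apply,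
      _root_.smul_apply, smul_eq_mul, L, B]
    ring
  rw [hexpand, integral_add, integral_add, integral_const_mul, integral_const_mul,
    integral_mul_clm_eq_zero_of_even hJeven,
    integral_mul_clm_apply_apply (fun i j => hint (by fun_prop)) hJmom, mul_zero, zero_add]
  · rfl
  · exact (hint (by fun_prop)).const_mul _
  · exact hint hr
  · exact (hint L.continuous).const_mul _
  · exact ((hint (by fun_prop)).const_mul _).add (hint hr)

theorem abs_integral_mul_taylorRemainder₂_le (hJ : Integrable J) (hJ0 : ∀ y, 0 ≤ J y) {R : ℝ}
    (hR : tsupport J ⊆ Metric.closedBall 0 R) {f : EuclideanSpace ℝ (Fin n) → ℝ}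
    (hf : ContDiff ℝ 2 f) {H α : ℝ} (hα : 0 ≤ α) (hH : 0 ≤ H)
    (hf₂ : ∀ x y (i j : Fin n), |pd2 f x i j - pd2 f y i j| ≤ H * ‖x - y‖ ^ α)
    {ε : ℝ} (hε : 0 < ε) (x : EuclideanSpace ℝ (Fin n)) :
    |∫ y, J y * taylorRemainder₂ f x (-(ε • y))|
      ≤ n ^ 2 * H * R ^ α * R ^ 2 * (∫ y, J y) * ε ^ α * ε ^ 2 := by
  set M := n ^ 2 * H * R ^ α * R ^ 2 * ε ^ α * ε ^ 2
  have hM (y : EuclideanSpace ℝ (Fin n)) : ‖J y * taylorRemainder₂ f x (-(ε • y))‖ ≤ J y * M := by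
    by_cases hy : y ∈ tsupport J
    · have hyR : ‖y‖ ≤ R := by simpa using hR hy
      have hεy : ‖-(ε • y)‖ = ε * ‖y‖ := by
        rw [norm_neg, norm_smul, Real.norm_eq_abs, abs_of_pos hε]
      rw [Real.norm_eq_abs, abs_mul, abs_of_nonneg (hJ0 y)]
      refine mul_le_mul_of_nonneg_left ?_ (hJ0 y)
      calc |taylorRemainder₂ f x (-(ε • y))|
          ≤ n ^ 2 * (H * ‖-(ε • y)‖ ^ α) * ‖-(ε • y)‖ ^ 2 :=
            abs_taylorRemainder₂_le_of_holder hf hα hH hf₂ x _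
        _ = n ^ 2 * H * ‖y‖ ^ α * ‖y‖ ^ 2 * ε ^ α * ε ^ 2 := by
            rw [hεy, Real.mul_rpow hε.le (norm_nonneg y)]
            ring
        _ ≤ M := by
            simp only [M]
            gcongr
            exact mul_nonneg (by positivity) (Real.rpow_nonneg ((norm_nonneg y).trans hyR) α)
    · simp [image_eq_zero_of_notMem_tsupport hy]
  calc |∫ y, J y * taylorRemainder₂ f x (-(ε • y))| ≤ ∫ y, J y * M :=
        norm_integral_le_of_norm_le (hJ.mul_const M) (ae_of_all _ hM)
    _ = n ^ 2 * H * R ^ α * R ^ 2 * (∫ y, J y) * ε ^ α * ε ^ 2 := by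
        rw [integral_mul_const]
        ring

theorem abs_Eop_sub_lap_le (hJ : Integrable J) (hJ0 : ∀ y, 0 ≤ J y) (hJeven : ∀ y, J (-y) = J y)
    {R : ℝ} (hR : tsupport J ⊆ Metric.closedBall 0 R) {CJ : ℝ}
    (hJmom : ∀ i j : Fin n, ∫ y, J y * (y i * y j) = if i = j then CJ else 0)
    {f : EuclideanSpace ℝ (Fin n) → ℝ} (hf : ContDiff ℝ 2 f) {H α : ℝ} (hα : 0 ≤ α) (hH : 0 ≤ H)
    (hf₂ : ∀ x y (i j : Fin n), |pd2 f x i j - pd2 f y i j| ≤ H * ‖x - y‖ ^ α)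
    {ε : ℝ} (hε : 0 < ε) (x : EuclideanSpace ℝ (Fin n)) :
    |Eop J ε f x - CJ / 2 * lap f x| ≤ n ^ 2 * H * R ^ α * R ^ 2 * (∫ y, J y) * ε ^ α := by
  have hJcs : HasCompactSupport J :=
    (isCompact_closedBall 0 R).of_isClosed_subset (isClosed_tsupport J) hR
  have heq : Eop J ε f x - CJ / 2 * lap f x
      = (ε ^ 2)⁻¹ * ∫ y, J y * taylorRemainder₂ f x (-(ε • y)) := by
    rw [Eop, integral_mul_sub_eq_add_integral_taylorRemainder₂ hJ hJcs hJeven hJmom hf]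
    field_simp
    ring
  rw [heq, abs_mul, abs_of_pos (by positivity), inv_mul_le_iff₀ (by positivity)]
  refine (abs_integral_mul_taylorRemainder₂_le hJ hJ0 hR hf hα hH hf₂ hε x).trans_eq ?_
  ring

end Nonlocal

theorem HasDerivWithinAt.nonneg_of_isMaxOn_Icc {φ : ℝ → ℝ} {a b d : ℝ}
    (hφ : HasDerivWithinAt φ d (Icc a b) b) (hab : a < b) (hmax : IsMaxOn φ (Icc a b) b) :
    0 ≤ d := by
  have hcone : a - b ∈ posTangentConeAt (Icc a b) b :=
    sub_mem_posTangentConeAt_of_segment_subset (by rw [segment_symm, segment_eq_Icc hab.le])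
  have := hmax.localize.hasFDerivWithinAt_nonpos hφ.hasFDerivWithinAt hcone
  rw [ContinuousLinearMap.toSpanSingleton_apply, smul_eq_mul] at this
  nlinarith

section MaximumPrinciple

variable {n : ℕ} {J : EuclideanSpace ℝ (Fin n) → ℝ} {ε T K : ℝ}
  {Ω : Set (EuclideanSpace ℝ (Fin n))} {W Wt : EuclideanSpace ℝ (Fin n) → ℝ → ℝ}

theorem le_add_mul_of_nonlocal_subsolution (hJ0 : ∀ y, 0 ≤ J y) (hΩ : IsCompact (closure Ω))
    (hK : 0 ≤ K)
    (hW : ContinuousOn (fun p : EuclideanSpace ℝ (Fin n) × ℝ => W p.1 p.2)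
      (closure Ω ×ˢ Icc (0 : ℝ) T))
    (hWt : ∀ x ∈ Ω, ∀ t ∈ Ioc (0 : ℝ) T,
      HasDerivWithinAt (fun s => W x s) (Wt x t) (Icc (0 : ℝ) T) t)
    (hsub : ∀ x ∈ Ω, ∀ t ∈ Ioc (0 : ℝ) T, Wt x t ≤ Eop J ε (fun y => W y t) x + K)
    (hbc : ∀ x ∉ Ω, ∀ t ∈ Icc (0 : ℝ) T, W x t = 0) (hic : ∀ x ∈ Ω, W x 0 = 0)
    {δ : ℝ} (hδ : 0 < δ) {x : EuclideanSpace ℝ (Fin n)} (hx : x ∈ Ω) {t : ℝ}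
    (ht : t ∈ Icc (0 : ℝ) T) : W x t ≤ (K + δ) * T := by
  obtain ⟨⟨x₀, t₀⟩, ⟨hx₀, ht₀⟩, hmax⟩ := (hΩ.prod isCompact_Icc).exists_isMaxOn
    ⟨(x, t), subset_closure hx, ht⟩
    (hW.sub (continuous_const.mul continuous_snd).continuousOn :
      ContinuousOn (fun p : EuclideanSpace ℝ (Fin n) × ℝ => W p.1 p.2 - (K + δ) * p.2) _)
  simp only [isMaxOn_iff, Pi.sub_apply] at hmax hx₀ ht₀
  have hxt : W x t - (K + δ) * t ≤ W x₀ t₀ - (K + δ) * t₀ := hmax (x, t) ⟨subset_closure hx, ht⟩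
  by_cases hpos : W x₀ t₀ ≤ 0
  · nlinarith [ht.1, ht.2, ht₀.1, ht₀.2]
  exfalso
  push Not at hpos
  have hx₀Ω : x₀ ∈ Ω := by
    by_contra h
    exact hpos.ne' (hbc x₀ h t₀ ht₀)
  have ht₀pos : 0 < t₀ := by
    refine ht₀.1.lt_of_ne fun h => hpos.ne' ?_
    rw [← h, hic x₀ hx₀Ω]
  have hspace : ∀ z, W z t₀ ≤ W x₀ t₀ := fun z => by
    by_cases hz : z ∈ closure Ω
    · simpa using hmax (z, t₀) ⟨hz, ht₀⟩
    · rw [hbc z (fun h => hz (subset_closure h)) t₀ ht₀]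
      exact hpos.le
  have htime : IsMaxOn (fun s => W x₀ s - (K + δ) * s) (Icc 0 t₀) t₀ := fun s hs =>
    hmax (x₀, s) ⟨hx₀, hs.1, hs.2.trans ht₀.2⟩
  have hderiv := (((hWt x₀ hx₀Ω t₀ ⟨ht₀pos, ht₀.2⟩).sub
    ((hasDerivAt_id t₀).const_mul (K + δ)).hasDerivWithinAt).mono
    (Icc_subset_Icc_right ht₀.2)).nonneg_of_isMaxOn_Icc ht₀pos htime
  have := hsub x₀ hx₀Ω t₀ ⟨ht₀pos, ht₀.2⟩
  have := Eop_nonpos_of_forall_le (ε := ε) hJ0 hspace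
  simp only [mul_one] at hderiv
  linarith

theorem le_mul_of_nonlocal_subsolution (hJ0 : ∀ y, 0 ≤ J y) (hΩ : IsCompact (closure Ω))
    (hK : 0 ≤ K) (hT : 0 < T)
    (hW : ContinuousOn (fun p : EuclideanSpace ℝ (Fin n) × ℝ => W p.1 p.2)
      (closure Ω ×ˢ Icc (0 : ℝ) T))
    (hWt : ∀ x ∈ Ω, ∀ t ∈ Ioc (0 : ℝ) T,
      HasDerivWithinAt (fun s => W x s) (Wt x t) (Icc (0 : ℝ) T) t)
    (hsub : ∀ x ∈ Ω, ∀ t ∈ Ioc (0 : ℝ) T, Wt x t ≤ Eop J ε (fun y => W y t) x + K)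
    (hbc : ∀ x ∉ Ω, ∀ t ∈ Icc (0 : ℝ) T, W x t = 0) (hic : ∀ x ∈ Ω, W x 0 = 0)
    {x : EuclideanSpace ℝ (Fin n)} (hx : x ∈ Ω) {t : ℝ} (ht : t ∈ Icc (0 : ℝ) T) :
    W x t ≤ K * T := by
  refine le_of_forall_pos_le_add fun η hη => ?_
  have := le_add_mul_of_nonlocal_subsolution hJ0 hΩ hK hW hWt hsub hbc hic (div_pos hη hT) hx ht
  rwa [add_mul, div_mul_cancel₀ _ hT.ne'] at this

end MaximumPrinciple

theorem abs_sub_le_mul_of_nonlocal_solution {n : ℕ} {J : EuclideanSpace ℝ (Fin n) → ℝ}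
    {ε T K : ℝ} {Ω : Set (EuclideanSpace ℝ (Fin n))} {u v vt : EuclideanSpace ℝ (Fin n) → ℝ → ℝ}
    (hJ0 : ∀ y, 0 ≤ J y) (hΩ : IsCompact (closure Ω)) (hK : 0 ≤ K) (hT : 0 < T)
    (hu : ContinuousOn (fun p : EuclideanSpace ℝ (Fin n) × ℝ => u p.1 p.2)
      (closure Ω ×ˢ Icc (0 : ℝ) T))
    (hv : ContinuousOn (fun p : EuclideanSpace ℝ (Fin n) × ℝ => v p.1 p.2)
      (closure Ω ×ˢ Icc (0 : ℝ) T))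
    (hut : ∀ x ∈ Ω, ∀ t ∈ Ioc (0 : ℝ) T,
      HasDerivWithinAt (fun s => u x s) (Eop J ε (fun y => u y t) x) (Icc (0 : ℝ) T) t)
    (hvt : ∀ x ∈ Ω, ∀ t ∈ Ioc (0 : ℝ) T,
      HasDerivWithinAt (fun s => v x s) (vt x t) (Icc (0 : ℝ) T) t)
    (hv_approx : ∀ x ∈ Ω, ∀ t ∈ Ioc (0 : ℝ) T, |Eop J ε (fun y => v y t) x - vt x t| ≤ K)
    (hu_int : ∀ x ∈ Ω, ∀ t ∈ Ioc (0 : ℝ) T,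
      Integrable fun y => J y * (u (x - ε • y) t - u x t))
    (hv_int : ∀ x ∈ Ω, ∀ t ∈ Ioc (0 : ℝ) T,
      Integrable fun y => J y * (v (x - ε • y) t - v x t))
    (hbc : ∀ x ∉ Ω, ∀ t ∈ Icc (0 : ℝ) T, u x t = v x t) (hic : ∀ x ∈ Ω, u x 0 = v x 0)
    {x : EuclideanSpace ℝ (Fin n)} (hx : x ∈ Ω) {t : ℝ} (ht : t ∈ Icc (0 : ℝ) T) :
    |u x t - v x t| ≤ K * T := by
  have huv := le_mul_of_nonlocal_subsolution (W := fun x t => u x t - v x t)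
    (Wt := fun x t => Eop J ε (fun y => u y t) x - vt x t) hJ0 hΩ hK hT (hu.sub hv)
    (fun x hx t ht => (hut x hx t ht).sub (hvt x hx t ht))
    (fun x hx t ht => by
      rw [Eop_sub (hu_int x hx t ht) (hv_int x hx t ht)]
      linarith [(abs_le.1 (hv_approx x hx t ht)).2])
    (fun x hx t ht => sub_eq_zero.2 (hbc x hx t ht)) (fun x hx => sub_eq_zero.2 (hic x hx)) hx ht
  have hvu := le_mul_of_nonlocal_subsolution (W := fun x t => v x t - u x t)
    (Wt := fun x t => vt x t - Eop J ε (fun y => u y t) x) hJ0 hΩ hK hT (hv.sub hu)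
    (fun x hx t ht => (hvt x hx t ht).sub (hut x hx t ht))
    (fun x hx t ht => by
      rw [Eop_sub (hv_int x hx t ht) (hu_int x hx t ht)]
      linarith [(abs_le.1 (hv_approx x hx t ht)).1])
    (fun x hx t ht => sub_eq_zero.2 (hbc x hx t ht).symm)
    (fun x hx => sub_eq_zero.2 (hic x hx).symm) hx ht
  exact abs_sub_le_iff.2 ⟨huv, hvu⟩

theorem stmt11_general (n : ℕ)
    (J : EuclideanSpace ℝ (Fin n) → ℝ) (hJint : Integrable J)
    (hJcs : HasCompactSupport J) (hJ0 : ∀ x, 0 ≤ J x) (hJeven : ∀ x, J (-x) = J x)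
    (CJ : ℝ)
    (hJmom : ∀ i j : Fin n, ∫ x, J x * (x i * x j) = if i = j then CJ else 0)
    (α : ℝ) (hα : α ∈ Ioc (0:ℝ) 1) (H : ℝ) (hH : 0 ≤ H)
    (Ω : Set (EuclideanSpace ℝ (Fin n))) (hΩo : IsOpen Ω) (hΩb : Bornology.IsBounded Ω)
    (T : ℝ) (hT : 0 < T)
    (g : EuclideanSpace ℝ (Fin n) → ℝ → ℝ) (u₀ : EuclideanSpace ℝ (Fin n) → ℝ)
    -- the solution ṽ of the heat-type problem
    (v : EuclideanSpace ℝ (Fin n) → ℝ → ℝ)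
    (hvbdd : ∃ C, ∀ x t, |v x t| ≤ C)
    (hvcont : Continuous (fun p : EuclideanSpace ℝ (Fin n) × ℝ => v p.1 p.2))
    (vt : EuclideanSpace ℝ (Fin n) → ℝ → ℝ)
    (hvt : ∀ x, ∀ t ∈ Icc (0:ℝ) T, HasDerivWithinAt (fun s => v x s) (vt x t) (Icc (0:ℝ) T) t)
    (hvC2 : ∀ t ∈ Icc (0:ℝ) T, ContDiff ℝ 2 (fun x => v x t))
    (hvHolder : ∀ t ∈ Icc (0:ℝ) T, ∀ x y, ∀ i j : Fin n,
      |pd2 (fun z => v z t) x i j - pd2 (fun z => v z t) y i j| ≤ H * ‖x - y‖ ^ α)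
    (hveq : ∀ x ∈ Ω, ∀ t ∈ Ioc (0:ℝ) T, vt x t = CJ / 2 * lap (fun y => v y t) x)
    (hvbc : ∀ x ∉ Ω, ∀ t ∈ Icc (0:ℝ) T, v x t = g x t)
    (hvic : ∀ x ∈ Ω, v x 0 = u₀ x)
    -- the solutions u^ε of the nonlocal problems
    (uε : ℝ → EuclideanSpace ℝ (Fin n) → ℝ → ℝ)
    (huεbdd : ∀ ε ∈ Ioc (0:ℝ) 1, ∃ C, ∀ x t, |uε ε x t| ≤ C)
    (huεcont : ∀ ε ∈ Ioc (0:ℝ) 1,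
      ContinuousOn (fun p : EuclideanSpace ℝ (Fin n) × ℝ => uε ε p.1 p.2)
        (closure Ω ×ˢ Icc (0:ℝ) T))
    (huεeq : ∀ ε ∈ Ioc (0:ℝ) 1, ∀ x ∈ Ω, ∀ t ∈ Ioc (0:ℝ) T,
      HasDerivWithinAt (fun s => uε ε x s)
        (Eop J ε (fun y => uε ε y t) x) (Icc (0:ℝ) T) t)
    (huεbc : ∀ ε ∈ Ioc (0:ℝ) 1, ∀ x ∉ Ω, ∀ t ∈ Icc (0:ℝ) T, uε ε x t = g x t)
    (huεic : ∀ ε ∈ Ioc (0:ℝ) 1, ∀ x ∈ Ω, uε ε x 0 = u₀ x) :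
    ∃ c : ℝ, ∀ ε ∈ Ioc (0:ℝ) 1, ∀ x ∈ Ω, ∀ t ∈ Icc (0:ℝ) T,
      |uε ε x t - v x t| ≤ c * ε ^ α := by
  obtain ⟨R, hR₀, hR⟩ := hJcs.isCompact.isBounded.subset_closedBall_lt 0 0
  set K := n ^ 2 * H * R ^ α * R ^ 2 * ∫ y, J y
  have hK : 0 ≤ K := by
    have := Real.rpow_nonneg hR₀.le α
    have : 0 ≤ ∫ y, J y := integral_nonneg hJ0
    positivity
  obtain ⟨Cv, hCv⟩ := hvbdd
  refine ⟨K * T, fun ε hε x hx t ht => ?_⟩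
  obtain ⟨Cu, hCu⟩ := huεbdd ε hε
  have hv_slice (s : ℝ) : Continuous fun z => v z s := hvcont.comp (Continuous.prodMk_left s)
  have hu_meas (s : ℝ) (hs : s ∈ Icc (0 : ℝ) T) : Measurable fun z => uε ε z s :=
    .of_continuousOn_of_eqOn_compl hΩo.measurableSet
      ((huεcont ε hε).comp (Continuous.prodMk_left s).continuousOn
        fun z hz => ⟨subset_closure hz, hs⟩)
      (hv_slice s) fun z hz => (huεbc ε hε z hz s hs).trans (hvbc z hz s hs).symm
  have hbound := abs_sub_le_mul_of_nonlocal_solution (K := K * ε ^ α) (vt := vt) hJ0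
    hΩb.isCompact_closure (mul_nonneg hK (Real.rpow_nonneg hε.1.le α)) hT (huεcont ε hε)
    hvcont.continuousOn (huεeq ε hε)
    (fun z _ s hs => hvt z s (Ioc_subset_Icc_self hs))
    (fun z hz s hs => by
      rw [hveq z hz s hs]
      exact abs_Eop_sub_lap_le hJint hJ0 hJeven hR hJmom (hvC2 s (Ioc_subset_Icc_self hs))
        hα.1.le hH (hvHolder s (Ioc_subset_Icc_self hs)) hε.1 z)
    (fun z _ s hs => integrable_mul_sub_comp_sub_smul hJint (hu_meas s (Ioc_subset_Icc_self hs))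
      ⟨Cu, fun z => hCu z s⟩ ε z)
    (fun z _ s _ => integrable_mul_sub_comp_sub_smul hJint (hv_slice s).measurable
      ⟨Cv, fun z => hCv z s⟩ ε z)
    (fun z hz s hs => (huεbc ε hε z hz s hs).trans (hvbc z hz s hs).symm)
    (fun z hz => (huεic ε hε z hz).trans (hvic z hz).symm) hx ht
  exact hbound.trans_eq (by ring)

/-- Solutions of the rescaled nonlocal convolution Dirichlet problems `∂ₜu^ε = ℰ_ε u^ε`
uniformly approximate, at rate `ε^α`, the solution of the heat-type Dirichlet problem
`∂ₜv = (C(J)/2) Δv`. -/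
theorem stmt11 (n : ℕ) (hn : 1 ≤ n)
    (J : EuclideanSpace ℝ (Fin n) → ℝ) (hJint : Integrable J)
    (hJcs : HasCompactSupport J) (hJ0 : ∀ x, 0 ≤ J x) (hJeven : ∀ x, J (-x) = J x)
    (CJ : ℝ) (hCJ : 0 < CJ)
    (hJmom : ∀ i j : Fin n, ∫ x, J x * (x i * x j) = if i = j then CJ else 0)
    (α : ℝ) (hα : α ∈ Ioc (0:ℝ) 1) (H : ℝ) (hH : 0 ≤ H)
    (Ω : Set (EuclideanSpace ℝ (Fin n))) (hΩo : IsOpen Ω) (hΩb : Bornology.IsBounded Ω)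
    (T : ℝ) (hT : 0 < T)
    (g : EuclideanSpace ℝ (Fin n) → ℝ → ℝ) (u₀ : EuclideanSpace ℝ (Fin n) → ℝ)
    -- the solution ṽ of the heat-type problem
    (v : EuclideanSpace ℝ (Fin n) → ℝ → ℝ)
    (hvbdd : ∃ C, ∀ x t, |v x t| ≤ C)
    (hvcont : Continuous (fun p : EuclideanSpace ℝ (Fin n) × ℝ => v p.1 p.2))
    (vt : EuclideanSpace ℝ (Fin n) → ℝ → ℝ)
    (hvt : ∀ x, ∀ t ∈ Icc (0:ℝ) T, HasDerivWithinAt (fun s => v x s) (vt x t) (Icc (0:ℝ) T) t)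
    (hvtcont : ∀ x, ContinuousOn (vt x) (Icc (0:ℝ) T))
    (hvC2 : ∀ t ∈ Icc (0:ℝ) T, ContDiff ℝ 2 (fun x => v x t))
    (hvHolder : ∀ t ∈ Icc (0:ℝ) T, ∀ x y, ∀ i j : Fin n,
      |pd2 (fun z => v z t) x i j - pd2 (fun z => v z t) y i j| ≤ H * ‖x - y‖ ^ α)
    (hveq : ∀ x ∈ Ω, ∀ t ∈ Ioc (0:ℝ) T, vt x t = CJ / 2 * lap (fun y => v y t) x)
    (hvbc : ∀ x ∉ Ω, ∀ t ∈ Icc (0:ℝ) T, v x t = g x t)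
    (hvic : ∀ x ∈ Ω, v x 0 = u₀ x)
    -- the solutions u^ε of the nonlocal problems
    (uε : ℝ → EuclideanSpace ℝ (Fin n) → ℝ → ℝ)
    (huεbdd : ∀ ε ∈ Ioc (0:ℝ) 1, ∃ C, ∀ x t, |uε ε x t| ≤ C)
    (huεcont : ∀ ε ∈ Ioc (0:ℝ) 1,
      ContinuousOn (fun p : EuclideanSpace ℝ (Fin n) × ℝ => uε ε p.1 p.2)
        (closure Ω ×ˢ Icc (0:ℝ) T))
    (huεeq : ∀ ε ∈ Ioc (0:ℝ) 1, ∀ x ∈ Ω, ∀ t ∈ Ioc (0:ℝ) T,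
      HasDerivWithinAt (fun s => uε ε x s)
        (Eop J ε (fun y => uε ε y t) x) (Icc (0:ℝ) T) t)
    (huεbc : ∀ ε ∈ Ioc (0:ℝ) 1, ∀ x ∉ Ω, ∀ t ∈ Icc (0:ℝ) T, uε ε x t = g x t)
    (huεic : ∀ ε ∈ Ioc (0:ℝ) 1, ∀ x ∈ Ω, uε ε x 0 = u₀ x) :
    ∃ c : ℝ, ∀ ε ∈ Ioc (0:ℝ) 1, ∀ x ∈ Ω, ∀ t ∈ Icc (0:ℝ) T,
      |uε ε x t - v x t| ≤ c * ε ^ α :=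
  stmt11_general n J hJint hJcs hJ0 hJeven CJ hJmom α hα H hH Ω hΩo hΩb T hT g u₀ v hvbdd hvcont vt
    hvt hvC2 hvHolder hveq hvbc hvic uε huεbdd huεcont huεeq huεbc huεic
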